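/- arXiv:math/0501151 — 3 statements merged into one kernel-verified Lean document; each statement's English description precedes it below -/
import Mathlib

section
/- Let G be a group and L ∈ G of infinite order. If there is a reversor R of L (R L R⁻¹ = L⁻¹) and also a symmetry structure S(L) = F × ⟨g⟩ with F a finite group of order N and g of infinite order (interpreted as: the centralizer of L is the internal direct product of a finite subgroup F of order N and an infinite cyclic subgroup ⟨g⟩), then R has finite order, the order of R is even, and it divides 2N. -/
/-- If `L` has infinite order, `R` is a reversor of `L`, and the centralizer of
`L` is the internal direct product of a finite subgroup `F` of order `N` with an infinite
cyclic subgroup `⟨g⟩`, then `R` has finite even order dividing `2N`. -/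
theorem stmt_1 {G : Type*} [Group G] (L R g : G) (F : Subgroup G) (N : ℕ)
    (hL : orderOf L = 0)
    (hrev : R * L * R⁻¹ = L⁻¹)
    (hN : Nat.card F = N) (hNpos : 0 < N)
    (hg : orderOf g = 0)
    (hdecomp : ∀ h : G, h ∈ Subgroup.centralizer ({L} : Set G) ↔
      ∃ f ∈ F, ∃ k : ℤ, h = f * g ^ k)
    (hcomm : ∀ f ∈ F, f * g = g * f)
    (hdisj : F ⊓ Subgroup.zpowers g = ⊥) :
    0 < orderOf R ∧ Even (orderOf R) ∧ orderOf R ∣ 2 * N := by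
  set C := Subgroup.centralizer ({L} : Set G) with hCdef
  -- injectivity of powers of g
  have ginj : ∀ n : ℤ, g ^ n = 1 → n = 0 := by
    intro n hn
    have h1 : g ^ n.natAbs = 1 := by
      rcases Int.natAbs_eq n with h | h
      · rw [← zpow_natCast, ← h, hn]
      · rw [← zpow_natCast, ← neg_neg (n.natAbs : ℤ), ← h, zpow_neg, hn, inv_one]
    have h2 := orderOf_dvd_of_pow_eq_one h1
    rw [hg] at h2
    exact Int.natAbs_eq_zero.mp (Nat.eq_zero_of_zero_dvd h2)
  -- cancellation of decompositions
  have cancel : ∀ f₁ ∈ F, ∀ f₂ ∈ F, ∀ k₁ k₂ : ℤ,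
      f₁ * g ^ k₁ = f₂ * g ^ k₂ → k₁ = k₂ := by
    intro f₁ hf₁ f₂ hf₂ k₁ k₂ heq
    have h1 : f₂⁻¹ * f₁ = g ^ (k₂ - k₁) := by
      rw [zpow_sub, eq_mul_inv_iff_mul_eq, mul_assoc, heq, inv_mul_cancel_left]
    have h2 : f₂⁻¹ * f₁ ∈ F ⊓ Subgroup.zpowers g :=
      ⟨F.mul_mem (F.inv_mem hf₂) hf₁, ⟨k₂ - k₁, h1.symm⟩⟩
    rw [hdisj] at h2
    have h3 : g ^ (k₂ - k₁) = 1 := by rw [← h1]; exact Subgroup.mem_bot.mp h2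
    have := ginj _ h3
    omega
  -- commuting
  have hcom : ∀ f ∈ F, ∀ k : ℤ, Commute f (g ^ k) := by
    intro f hf k
    have h : Commute f g := hcomm f hf
    exact h.zpow_right k
  have hpow : ∀ f ∈ F, ∀ k n : ℤ, (f * g ^ k) ^ n = f ^ n * g ^ (k * n) := by
    intro f hf k n
    rw [(hcom f hf k).mul_zpow, ← zpow_mul]
  -- every element of F has order dividing N
  have hFN : ∀ f ∈ F, f ^ N = 1 := by
    intro f hf
    have h := pow_card_eq_one' (x := (⟨f, hf⟩ : F))
    rw [hN] at h
    simpa using congrArg (Subtype.val) h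
  -- torsion elements of C lie in F
  have htor : ∀ x ∈ C, x ^ N = 1 → x ∈ F := by
    intro x hx h1
    obtain ⟨f, hf, k, rfl⟩ := (hdecomp x).mp hx
    have h2 : (f * g ^ k) ^ (N : ℤ) = f ^ (N : ℤ) * g ^ (k * N) := hpow f hf k N
    rw [zpow_natCast, h1] at h2
    have h3 : f ^ (N : ℤ) * g ^ (k * (N : ℤ)) = (1 : G) * g ^ (0 : ℤ) := by
      rw [← h2]; simp
    have h4 := cancel _ (F.zpow_mem hf _) 1 F.one_mem _ _ h3
    have hk : k = 0 := by
      have hN0 : (N : ℤ) ≠ 0 := by exact_mod_cast hNpos.ne'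
      exact (mul_eq_zero.mp h4).resolve_right hN0
    rw [hk]; simpa using hf
  -- basic conjugation relations
  have hRL : R * L = L⁻¹ * R := by rw [← hrev, inv_mul_cancel_right]
  have hRL' : R * L⁻¹ = L * R := by
    apply mul_left_cancel (a := L⁻¹)
    calc L⁻¹ * (R * L⁻¹) = (L⁻¹ * R) * L⁻¹ := by group
    _ = (R * L) * L⁻¹ := by rw [hRL]
    _ = L⁻¹ * (L * R) := by group
  -- R normalizes C
  have hconj : ∀ x ∈ C, R * x * R⁻¹ ∈ C := by
    intro x hx
    rw [Subgroup.mem_centralizer_singleton_iff] at hx ⊢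
    have cx : Commute x L := hx
    have hR2 : R⁻¹ * L = L⁻¹ * R⁻¹ := by
      apply mul_left_cancel (a := R)
      calc R * (R⁻¹ * L) = L := by group
      _ = (R * L⁻¹) * R⁻¹ := by rw [hRL']; group
      _ = R * (L⁻¹ * R⁻¹) := by group
    calc R * x * R⁻¹ * L = R * x * (L⁻¹ * R⁻¹) := by rw [mul_assoc, hR2]
    _ = R * (x * L⁻¹) * R⁻¹ := by group
    _ = R * (L⁻¹ * x) * R⁻¹ := by rw [cx.inv_right.eq]
    _ = (R * L⁻¹) * x * R⁻¹ := by group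
    _ = L * (R * x * R⁻¹) := by rw [hRL']; group
  -- memberships
  have hLC : L ∈ C := Subgroup.mem_centralizer_singleton_iff.mpr rfl
  have hgC : g ∈ C := (hdecomp g).mpr ⟨1, F.one_mem, 1, by simp⟩
  have hFC : ∀ f ∈ F, f ∈ C := fun f hf => (hdecomp f).mpr ⟨f, hf, 0, by simp⟩
  have hR2C : R * R ∈ C := by
    rw [Subgroup.mem_centralizer_singleton_iff]
    calc R * R * L = R * (L⁻¹ * R) := by rw [mul_assoc, hRL]
    _ = (R * L⁻¹) * R := by group
    _ = L * (R * R) := by rw [hRL']; group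
  -- conjugates of F-elements are in F
  have hconjF : ∀ f ∈ F, R * f * R⁻¹ ∈ F := by
    intro f hf
    refine htor _ (hconj f (hFC f hf)) ?_
    rw [conj_pow, hFN f hf]; group
  -- decomposition of L
  obtain ⟨fL, hfL, kL, hLdec⟩ := (hdecomp L).mp hLC
  have hkL : kL ≠ 0 := by
    intro h
    rw [h, zpow_zero, mul_one] at hLdec
    have : L ^ N = 1 := hLdec ▸ hFN fL hfL
    have := orderOf_dvd_of_pow_eq_one this
    rw [hL] at this
    exact hNpos.ne' (Nat.eq_zero_of_zero_dvd this)
  -- decomposition of R g R⁻¹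
  obtain ⟨f0, hf0, e, hgdec⟩ := (hdecomp _).mp (hconj g hgC)
  -- show e = -1
  have he : e = -1 := by
    have hA : L⁻¹ = fL⁻¹ * g ^ (-kL) := by
      rw [hLdec, mul_inv_rev, zpow_neg]
      exact (hcom fL hfL kL).inv_inv.eq.symm
    have hB : L⁻¹ = (R * fL * R⁻¹) * (f0 ^ kL * g ^ (e * kL)) := by
      rw [← hrev, hLdec, ← hpow f0 hf0 e kL, ← hgdec, conj_zpow]
      group
    have hB' : ((R * fL * R⁻¹) * f0 ^ kL) * g ^ (e * kL) = fL⁻¹ * g ^ (-kL) := by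
      rw [mul_assoc, ← hB, hA]
    have h4 := cancel _ (F.mul_mem (hconjF fL hfL) (F.zpow_mem hf0 kL)) _
      (F.inv_mem hfL) _ _ hB'
    have h5 : (e + 1) * kL = 0 := by rw [add_mul, one_mul, h4]; ring
    rcases mul_eq_zero.mp h5 with h | h
    · linarith
    · exact absurd h hkL
  -- decomposition of R²
  obtain ⟨f, hf, k, hR2dec⟩ := (hdecomp (R * R)).mp hR2C
  have hk0 : k = 0 := by
    have hB : R * (R * R) * R⁻¹ = (R * f * R⁻¹) * (f0 ^ k * g ^ ((-1) * k)) := by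
      rw [hR2dec, ← hpow f0 hf0 (-1) k, ← he, ← hgdec, conj_zpow]
      group
    have hB' : ((R * f * R⁻¹) * f0 ^ k) * g ^ ((-1) * k) = f * g ^ k := by
      rw [mul_assoc, ← hB, ← hR2dec]
      group
    have h4 := cancel _ (F.mul_mem (hconjF f hf) (F.zpow_mem hf0 k)) _ hf _ _ hB'
    omega
  rw [hk0, zpow_zero, mul_one] at hR2dec
  -- R^(2N) = 1
  have hR2N : R ^ (2 * N) = 1 := by
    rw [pow_mul, pow_two, hR2dec, hFN f hf]
  have hdvd : orderOf R ∣ 2 * N := orderOf_dvd_of_pow_eq_one hR2N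
  have hpos : 0 < orderOf R := by
    rcases Nat.eq_zero_or_pos (orderOf R) with h | h
    · rw [h] at hdvd
      have := Nat.eq_zero_of_zero_dvd hdvd
      omega
    · exact h
  refine ⟨hpos, ?_, hdvd⟩
  by_contra hodd
  -- orderOf R odd ⇒ R ∈ C ⇒ contradiction
  set m := orderOf R with hm
  have hcop : Nat.Coprime 2 m := Nat.coprime_two_left.mpr (Nat.not_even_iff_odd.mp hodd)
  have hcop' : IsCoprime (2 : ℤ) (m : ℤ) := by
    rw [Int.isCoprime_iff_gcd_eq_one]
    exact_mod_cast hcop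
  obtain ⟨u, v, huv⟩ := hcop'
  have hm1 : R ^ (m : ℤ) = 1 := by rw [zpow_natCast]; exact pow_orderOf_eq_one R
  have hRC : R ∈ C := by
    have hRe : R = (R * R) ^ u := by
      calc R = R ^ (u * 2 + v * (m : ℤ)) := by rw [huv, zpow_one]
      _ = (R ^ (2 : ℤ)) ^ u * (R ^ (m : ℤ)) ^ v := by
          rw [zpow_add, mul_comm u 2, mul_comm v ((m : ℤ)), zpow_mul, zpow_mul]
      _ = (R * R) ^ u := by rw [hm1, one_zpow, mul_one, zpow_two]
    rw [hRe]
    exact C.zpow_mem hR2C u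
  rw [Subgroup.mem_centralizer_singleton_iff] at hRC
  have : L⁻¹ = L := by rw [← hrev, hRC]; group
  have hL2 : L ^ 2 = 1 := by
    calc L ^ 2 = L⁻¹ * L := by rw [pow_two, this]
    _ = 1 := inv_mul_cancel L
  have := orderOf_dvd_of_pow_eq_one hL2
  rw [hL] at this
  exact absurd (Nat.eq_zero_of_zero_dvd this) (by omega)
end

section
/- Let K be a field with char K ≠ 2, and let e: (x,y) ↦ (αx + P(y), βy + v) be an elementary polynomial transformation of K² with α, β ∈ {1, −1}. Then e is an involution (e² = id, e ≠ id) if and only if either (i) α = −1, β = 1, v = 0 (with P arbitrary), i.e. e(x,y) = (−x + P(y), y); or (ii) β = −1, and P satisfies P(v − y) = −α P(y) for all y, i.e. e(x,y) = (αx + P(y), −y + v). -/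
/-- For `char K ≠ 2` and `α, β ∈ {1,-1}`, the elementary map
`e(x,y) = (αx + P(y), βy + v)` is an involution iff either `α = -1, β = 1, v = 0`
(arbitrary `P`), or `β = -1` and `P(v - y) = -α P(y)` for all `y`. -/
theorem stmt_12 {K : Type*} [Field K] (hchar : (2 : K) ≠ 0) (α β v : K)
    (hα : α = 1 ∨ α = -1) (hβ : β = 1 ∨ β = -1)
    (P : Polynomial K) (e : K × K → K × K)
    (he : e = fun p => (α * p.1 + P.eval p.2, β * p.2 + v)) :
    (e ∘ e = id ∧ e ≠ id) ↔
      ((α = -1 ∧ β = 1 ∧ v = 0) ∨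
       (β = -1 ∧ ∀ y : K, P.eval (v - y) = -α * P.eval y)) := by
  subst he
  have hα2 : α * α = 1 := by rcases hα with h | h <;> subst h <;> ring
  constructor
  · rintro ⟨hcomp, hne⟩
    have hpt : ∀ x y : K,
        (α * (α * x + P.eval y) + P.eval (β * y + v), β * (β * y + v) + v) = (x, y) := by
      intro x y
      have := congrFun hcomp (x, y)
      simpa using this
    have h1 : ∀ y : K, α * P.eval y + P.eval (β * y + v) = 0 := by
      intro y
      have := congrArg Prod.fst (hpt 0 y)
      simp only at this
      linear_combination this - hα2 * 0
    have h2 : β * v + v = 0 := by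
      have := congrArg Prod.snd (hpt 0 0)
      simp only at this
      linear_combination this
    rcases hβ with hb | hb
    · subst hb
      have hv : v = 0 := by
        have h2v : 2 * v = 0 := by linear_combination h2
        exact (mul_eq_zero.mp h2v).resolve_left hchar
      subst hv
      rcases hα with ha | ha
      · exfalso
        apply hne
        funext p
        have hy : (1 : K) * p.2 + 0 = p.2 := by ring
        have h1' := h1 p.2
        rw [ha, hy] at h1'
        have hP0 : P.eval p.2 = 0 := by
          have h2P : 2 * P.eval p.2 = 0 := by linear_combination h1'
          exact (mul_eq_zero.mp h2P).resolve_left hchar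
        simp [ha, hP0]
      · exact Or.inl ⟨ha, rfl, rfl⟩
    · subst hb
      refine Or.inr ⟨rfl, fun y => ?_⟩
      have h1' := h1 y
      have hr : (-1 : K) * y + v = v - y := by ring
      rw [hr] at h1'
      linear_combination h1'
  · rintro (⟨ha, hb, hv⟩ | ⟨hb, hP⟩)
    · subst ha; subst hb; subst hv
      constructor
      · funext p
        simp only [Function.comp_apply, id_eq]
        have hy : (1 : K) * p.2 + 0 = p.2 := by ring
        rw [hy]
        exact Prod.ext (by ring) (by ring)
      · intro h
        have h1 := congrFun h (1, 0)
        have h0 := congrFun h (0, 0)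
        simp only [id_eq, Prod.mk.injEq] at h1 h0
        exact hchar (by linear_combination h0.1 - h1.1)
    · subst hb
      constructor
      · funext p
        simp only [Function.comp_apply, id_eq]
        have hr : (-1 : K) * p.2 + v = v - p.2 := by ring
        rw [hr, hP p.2]
        exact Prod.ext (by linear_combination p.1 * hα2) (by ring)
      · intro h
        have h0 := congrFun h (0, 0)
        have h1' := congrFun h (0, 1)
        simp only [id_eq, Prod.mk.injEq] at h0 h1'
        exact hchar (by linear_combination h0.2 - h1'.2)
end

section
/- Let K be a field of characteristic p > 0 (p an odd prime) and let f be the polynomial automorphism of K² given by f(x,y) = (y, x + y^p − y). Then f commutes with the translation t(x,y) = (x+1, y+1) and with I(x,y) = (−x,−y), while t and I do not commute; hence the centralizer of f in the group of polynomial automorphisms of K² contains a dihedral group ⟨t, I⟩ of order 2p and is not abelian. -/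
/-- In characteristic `p` (odd prime), `f(x,y) = (y, x + yᵖ - y)` commutes
with `t(x,y) = (x+1, y+1)` and with `I(x,y) = (-x,-y)`, while `t` and `I` do not commute
(`I ∘ t = t⁻¹ ∘ I`); `t` has order `p`, `I` has order `2`, `⟨t, I⟩` is dihedral of order
`2p`, and the centralizer of `f` is not abelian. -/
theorem stmt_17 {K : Type*} [Field K] (p : ℕ) (hp : p.Prime) (hodd : p ≠ 2) [CharP K p]
    (f t I : K × K → K × K)
    (hf : f = fun q => (q.2, q.1 + q.2 ^ p - q.2))
    (ht : t = fun q => (q.1 + 1, q.2 + 1))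
    (hI : I = fun q => (-q.1, -q.2)) :
    f ∘ t = t ∘ f ∧
    f ∘ I = I ∘ f ∧
    I ∘ t ≠ t ∘ I ∧
    I ∘ t = t^[p - 1] ∘ I ∧
    t^[p] = id ∧
    (∀ m : ℕ, 0 < m → m < p → t^[m] ≠ id) ∧
    I ∘ I = id ∧ I ≠ id ∧
    ¬ (∀ u v : K × K → K × K, u ∘ f = f ∘ u → v ∘ f = f ∘ v → u ∘ v = v ∘ u) := by
  haveI : Fact p.Prime := ⟨hp⟩
  subst hf ht hI
  have hpK : (p : K) = 0 := CharP.cast_eq_zero K p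
  have htwo : (2 : K) ≠ 0 := by
    intro h
    have := (CharP.cast_eq_zero_iff K p 2).mp (by exact_mod_cast h)
    exact hodd ((Nat.prime_dvd_prime_iff_eq hp Nat.prime_two).mp this)
  have hiter : ∀ n : ℕ, (fun q : K × K => (q.1 + 1, q.2 + 1))^[n]
      = fun q : K × K => (q.1 + n, q.2 + n) := by
    intro n
    induction n with
    | zero => funext q; simp
    | succ n ih =>
      rw [Function.iterate_succ', ih]
      funext q
      simp only [Function.comp_apply]
      push_cast
      exact Prod.ext (by ring) (by ring)
  have hft : (fun q : K × K => (q.2, q.1 + q.2 ^ p - q.2)) ∘ (fun q : K × K => (q.1 + 1, q.2 + 1))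
      = (fun q : K × K => (q.1 + 1, q.2 + 1)) ∘ (fun q : K × K => (q.2, q.1 + q.2 ^ p - q.2)) := by
    funext q
    simp only [Function.comp_apply]
    refine Prod.ext rfl ?_
    simp only
    rw [add_pow_char]
    ring_nf
  have hfI : (fun q : K × K => (q.2, q.1 + q.2 ^ p - q.2)) ∘ (fun q : K × K => (-q.1, -q.2))
      = (fun q : K × K => (-q.1, -q.2)) ∘ (fun q : K × K => (q.2, q.1 + q.2 ^ p - q.2)) := by
    funext q
    simp only [Function.comp_apply]
    refine Prod.ext rfl ?_
    simp only
    rw [(hp.odd_of_ne_two hodd).neg_pow]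
    ring
  have hne : (fun q : K × K => (-q.1, -q.2)) ∘ (fun q : K × K => (q.1 + 1, q.2 + 1))
      ≠ (fun q : K × K => (q.1 + 1, q.2 + 1)) ∘ (fun q : K × K => (-q.1, -q.2)) := by
    intro h
    have := congrArg (fun g => (g (0, 0)).1) h
    simp only [Function.comp_apply] at this
    apply htwo
    have : (-1 : K) = 1 := by simpa using this
    linear_combination -this
  refine ⟨hft, hfI, hne, ?_, ?_, ?_, ?_, ?_, ?_⟩
  · rw [hiter]
    funext q
    simp only [Function.comp_apply]
    have : ((p - 1 : ℕ) : K) = -1 := by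
      rw [Nat.cast_sub hp.one_lt.le, hpK]; ring
    rw [this]
    exact Prod.ext (by ring) (by ring)
  · rw [hiter, hpK]
    funext q; simp
  · intro m hm hmp h
    rw [hiter] at h
    have := congrArg (fun g => (g ((0 : K), (0 : K))).1) h
    simp only [id_eq, zero_add] at this
    have hdvd := (CharP.cast_eq_zero_iff K p m).mp this
    exact absurd (Nat.le_of_dvd hm hdvd) (not_le.mpr hmp)
  · funext q; simp
  · intro h
    have := congrArg (fun g => (g ((1 : K), (1 : K))).1) h
    simp only [id_eq] at this
    apply htwo
    linear_combination -this
  · intro H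
    exact hne (H _ _ hfI.symm hft.symm)
end
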